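/- arXiv:1601.00207 — 2 statements merged into one kernel-verified Lean document; each statement's English description precedes it below -/
import Mathlib

section
/- For U = {1, e^{iπ/6}, e^{iπ/3}, e^{iπ/2}}, the set R(U) is a subring of ℂ (it contains 0 and 1 and is closed under addition, negation, and multiplication). -/
/-!
Write points as `x + y √3 i` (`skewPt √3 x y`). In these coordinates the four directions of `U`
are, up to real factors, the integer vectors `(1,0), (3,1), (1,1), (0,1)`, whose pairwise
determinants all divide `6`. Intersecting two lines is Cramer's rule, so `R(U)` stays inside
`ℤ[1/6][√-3] = {x + y √3 i : x, y ∈ ℤ[1/6]}`. Conversely, a few explicit intersections show that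
the real points of `R(U)` form an additive group containing `1` and stable under `x ↦ x / 6`
(as `2x/3 - x/2`), hence containing `ℤ[1/6]`, and that `x + y √3 i ∈ R(U)` for `x, y` in it.
So `R(U) = ℤ[1/6][√-3]`, which is a ring.
-/

open Complex

/-- The bracket `[x,y] = x * conj y - y * conj x`. -/
noncomputable def brkt (x y : ℂ) : ℂ := x * (starRingEnd ℂ) y - y * (starRingEnd ℂ) x

/-- `lineInt α β p q` is the intersection point `I_{α,β}(p,q)` of the line through `p`
with direction `α` and the line through `q` with direction `β` (for unit `α ≠ ±β`),
given by the formula of Buhler et al. -/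
noncomputable def lineInt (α β p q : ℂ) : ℂ :=
  brkt α p / brkt α β * β + brkt β q / brkt β α * α

/-- The sets `S n` in the inductive construction. -/
def stepSet (U : Set ℂ) : ℕ → Set ℂ
  | 0 => {0, 1}
  | n + 1 => {z | ∃ α ∈ U, ∃ β ∈ U, α ≠ β ∧ α ≠ -β ∧
      ∃ p ∈ stepSet U n, ∃ q ∈ stepSet U n, z = lineInt α β p q}

/-- `RU U = ⋃ n, S n`. -/
def RU (U : Set ℂ) : Set ℂ := ⋃ n, stepSet U n

/-- Elementary monomials of `U`. -/
def IsElem (U : Set ℂ) (z : ℂ) : Prop :=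
  ∃ α ∈ U, ∃ β ∈ U, α ≠ β ∧ α ≠ -β ∧ z = lineInt α β 0 1

/-- Monomials of `U`, defined inductively. -/
inductive IsMonomial (U : Set ℂ) : ℂ → Prop
  | elementary (α β : ℂ) (hα : α ∈ U) (hβ : β ∈ U) (h1 : α ≠ β) (h2 : α ≠ -β) :
      IsMonomial U (lineInt α β 0 1)
  | step (α β m : ℂ) (hα : α ∈ U) (hβ : β ∈ U) (h1 : α ≠ β) (h2 : α ≠ -β)
      (hm : IsMonomial U m) : IsMonomial U (lineInt α β 0 m)

/-- `P`: the real numbers arising as length-two monomials `I_{γ,δ}(0,z)` on the real axis. -/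
def projSet (U : Set ℂ) : Set ℝ :=
  {r | ∃ γ ∈ U, ∃ δ ∈ U, γ ≠ δ ∧ γ ≠ -δ ∧ ∃ z, IsElem U z ∧ (r : ℂ) = lineInt γ δ 0 z}

/-- `m` is a `ℤ[P]`-linear combination of elementary monomials of `U`. -/
def IsZPComb (U : Set ℂ) (m : ℂ) : Prop :=
  ∃ (n : ℕ) (c : Fin n → ℝ) (z : Fin n → ℂ),
    (∀ i, c i ∈ Subring.closure (projSet U)) ∧ (∀ i, IsElem U (z i)) ∧
    m = ∑ i, (c i : ℂ) * z i


lemma brkt_swap (α β : ℂ) : brkt β α = -brkt α β := by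
  unfold brkt; ring

lemma lineInt_eq_div (α β p q : ℂ) :
    lineInt α β p q = (brkt α p * β - brkt β q * α) / brkt α β := by
  rw [lineInt, brkt_swap β α, div_neg, sub_div]; ring

lemma brkt_mul_sub_brkt_mul (α β p : ℂ) : brkt α p * β - brkt β p * α = brkt α β * p := by
  unfold brkt; ring

lemma lineInt_self {α β : ℂ} (h : brkt α β ≠ 0) (p : ℂ) : lineInt α β p p = p := by
  rw [lineInt_eq_div, brkt_mul_sub_brkt_mul, mul_div_cancel_left₀ _ h]

lemma ne_and_ne_neg_of_brkt_ne_zero {α β : ℂ} (h : brkt α β ≠ 0) : α ≠ β ∧ α ≠ -β := by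
  constructor <;> rintro rfl <;> apply h <;> simp only [brkt, map_neg] <;> ring

section General

variable {U : Set ℂ}

lemma stepSet_mono (hU : ∃ α ∈ U, ∃ β ∈ U, brkt α β ≠ 0) : Monotone (stepSet U) := by
  obtain ⟨α, hα, β, hβ, h⟩ := hU
  obtain ⟨hne, hne'⟩ := ne_and_ne_neg_of_brkt_ne_zero h
  exact monotone_nat_of_le_succ fun n p hp =>
    ⟨α, hα, β, hβ, hne, hne', p, hp, p, hp, (lineInt_self h p).symm⟩

lemma zero_mem_RU : (0 : ℂ) ∈ RU U := Set.mem_iUnion.mpr ⟨0, Or.inl rfl⟩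

lemma one_mem_RU : (1 : ℂ) ∈ RU U := Set.mem_iUnion.mpr ⟨0, Or.inr rfl⟩

lemma lineInt_mem_RU (hU : ∃ α ∈ U, ∃ β ∈ U, brkt α β ≠ 0) {α β p q : ℂ} (hα : α ∈ U)
    (hβ : β ∈ U) (hne : α ≠ β) (hne' : α ≠ -β) (hp : p ∈ RU U) (hq : q ∈ RU U) :
    lineInt α β p q ∈ RU U := by
  obtain ⟨m, hp⟩ := Set.mem_iUnion.mp hp
  obtain ⟨n, hq⟩ := Set.mem_iUnion.mp hq
  exact Set.mem_iUnion.mpr ⟨max m n + 1, α, hα, β, hβ, hne, hne',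
    p, stepSet_mono hU (le_max_left m n) hp, q, stepSet_mono hU (le_max_right m n) hq, rfl⟩

lemma RU_subset_of_lineInt_mem {S : Set ℂ} (h0 : 0 ∈ S) (h1 : 1 ∈ S)
    (hS : ∀ α ∈ U, ∀ β ∈ U, α ≠ β → α ≠ -β → ∀ p ∈ S, ∀ q ∈ S, lineInt α β p q ∈ S) :
    RU U ⊆ S := by
  refine Set.iUnion_subset fun n => ?_
  induction n with
  | zero => rintro z (rfl | rfl) <;> assumption
  | succ n ih =>
    rintro z ⟨α, hα, β, hβ, hne, hne', p, hp, q, hq, rfl⟩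
    exact hS α hα β hβ hne hne' p (ih hp) q (ih hq)

end General

def skewPt (c x y : ℝ) : ℂ := ⟨x, c * y⟩

lemma skewPt_zero (c : ℝ) : skewPt c 0 0 = 0 := by
  apply Complex.ext <;> simp [skewPt]

lemma skewPt_one (c : ℝ) : skewPt c 1 0 = 1 := by
  apply Complex.ext <;> simp [skewPt]

lemma brkt_skewPt (c a b x y : ℝ) :
    brkt (skewPt c a b) (skewPt c x y) = ((2 * c * (b * x - a * y) : ℝ) : ℂ) * I := by
  apply Complex.ext <;> simp [brkt, skewPt] <;> ring

lemma lineInt_ofReal_mul {r s : ℝ} (hr : r ≠ 0) (hs : s ≠ 0) (α β p q : ℂ) :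
    lineInt (r * α) (s * β) p q = lineInt α β p q := by
  have hr' : (r : ℂ) ≠ 0 := ofReal_ne_zero.mpr hr
  have hs' : (s : ℂ) ≠ 0 := ofReal_ne_zero.mpr hs
  simp only [lineInt, brkt, map_mul, conj_ofReal]
  field_simp

lemma skewPt_add (c x y x' y' : ℝ) :
    skewPt c x y + skewPt c x' y' = skewPt c (x + x') (y + y') := by
  apply Complex.ext <;> simp [skewPt]; ring

/-- Cramer's rule; for parallel directions both sides are the junk value `0`. -/
lemma lineInt_skewPt {c : ℝ} (hc : c ≠ 0) (a b a' b' x y x' y' : ℝ) :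
    lineInt (skewPt c a b) (skewPt c a' b') (skewPt c x y) (skewPt c x' y') =
      skewPt c (((b * x - a * y) * a' - (b' * x' - a' * y') * a) / (b * a' - a * b'))
        (((b * x - a * y) * b' - (b' * x' - a' * y') * b) / (b * a' - a * b')) := by
  rw [lineInt_eq_div]
  simp only [brkt_skewPt]
  rcases eq_or_ne (b * a' - a * b') 0 with hδ | hδ
  · simp [hδ, skewPt_zero]
  · have hd : ((2 * c * (b * a' - a * b') : ℝ) : ℂ) * I ≠ 0 := by
      simp only [ne_eq, mul_eq_zero, ofReal_eq_zero, I_ne_zero, or_false, not_or]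
      exact ⟨⟨two_ne_zero, hc⟩, hδ⟩
    rw [div_eq_iff hd]
    apply Complex.ext
    · simp [skewPt]; field_simp; ring
    · simp [skewPt]; field_simp

lemma skewPt_mul (c x y x' y' : ℝ) :
    skewPt c x y * skewPt c x' y' = skewPt c (x * x' - c ^ 2 * (y * y')) (x * y' + y * x') := by
  apply Complex.ext <;> simp [skewPt] <;> ring

lemma Subring.closure_singleton_subset_of_mul_mem {R : Type*} [Ring R] {a : R}
    (G : AddSubgroup R) (h1 : (1 : R) ∈ G) (ha : ∀ x ∈ G, a * x ∈ G) :
    (Subring.closure {a} : Set R) ⊆ G := by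
  intro r hr
  suffices ∀ x ∈ G, r * x ∈ G by simpa using this 1 h1
  induction hr using Subring.closure_induction with
  | mem x hx => rwa [Set.mem_singleton_iff.mp hx]
  | zero => simp [G.zero_mem]
  | one => simp
  | add x y _ _ hx hy => intro g hg; rw [add_mul]; exact G.add_mem (hx g hg) (hy g hg)
  | neg x _ hx => intro g hg; rw [neg_mul]; exact G.neg_mem (hx g hg)
  | mul x y _ _ hx hy => intro g hg; rw [mul_assoc]; exact hx _ (hy g hg)

def skewSubring (S : Subring ℝ) (c : ℝ) (hc : c ^ 2 ∈ S) : Subring ℂ where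
  carrier := {z | ∃ x ∈ S, ∃ y ∈ S, z = skewPt c x y}
  zero_mem' := ⟨0, S.zero_mem, 0, S.zero_mem, (skewPt_zero c).symm⟩
  one_mem' := ⟨1, S.one_mem, 0, S.zero_mem, (skewPt_one c).symm⟩
  add_mem' := by
    rintro _ _ ⟨x, hx, y, hy, rfl⟩ ⟨x', hx', y', hy', rfl⟩
    exact ⟨_, S.add_mem hx hx', _, S.add_mem hy hy', skewPt_add c x y x' y'⟩
  neg_mem' := by
    rintro _ ⟨x, hx, y, hy, rfl⟩
    exact ⟨-x, S.neg_mem hx, -y, S.neg_mem hy, by apply Complex.ext <;> simp [skewPt]⟩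
  mul_mem' := by
    rintro _ _ ⟨x, hx, y, hy, rfl⟩ ⟨x', hx', y', hy', rfl⟩
    refine ⟨_, S.sub_mem (S.mul_mem hx hx') (S.mul_mem hc (S.mul_mem hy hy')), _,
      S.add_mem (S.mul_mem hx hy') (S.mul_mem hy hx'), skewPt_mul c x y x' y'⟩

lemma lineInt_mem_skewSubring {S : Subring ℝ} {c : ℝ} (hc : c ^ 2 ∈ S) (hc0 : c ≠ 0)
    {a b a' b' x y x' y' : ℝ} (ha : a ∈ S) (hb : b ∈ S) (ha' : a' ∈ S) (hb' : b' ∈ S)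
    (hx : x ∈ S) (hy : y ∈ S) (hx' : x' ∈ S) (hy' : y' ∈ S) (hδ : (b * a' - a * b')⁻¹ ∈ S) :
    lineInt (skewPt c a b) (skewPt c a' b') (skewPt c x y) (skewPt c x' y') ∈
      skewSubring S c hc := by
  rw [lineInt_skewPt hc0]
  refine ⟨_, ?_, _, ?_, rfl⟩ <;> rw [div_eq_mul_inv] <;>
    repeat' first | assumption | apply S.mul_mem | apply S.sub_mem

def zSixth : Subring ℝ := Subring.closure {6⁻¹}

lemma sqrt_three_sq_mem_zSixth : √3 ^ 2 ∈ zSixth := by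
  rw [Real.sq_sqrt (by norm_num)]
  exact_mod_cast natCast_mem zSixth 3

lemma inv_intCast_mem_zSixth {d : ℤ} (hd : d ∣ 6 ∨ d = 0) : (d : ℝ)⁻¹ ∈ zSixth := by
  obtain ⟨k, hk⟩ | rfl := hd
  · have hdk : (d : ℝ) * k = 6 := by exact_mod_cast hk.symm
    rw [inv_eq_of_mul_eq_one_right (a := (d : ℝ)) (b := k * 6⁻¹)
      (by rw [← mul_assoc, hdk]; norm_num)]
    exact zSixth.mul_mem (intCast_mem zSixth k) (Subring.subset_closure rfl)
  · simp

def U15 : Set ℂ :=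
  {1, exp ((Real.pi / 6 : ℂ) * I), exp ((Real.pi / 3 : ℂ) * I), exp ((Real.pi / 2 : ℂ) * I)}

def dirsU15 : Finset (ℤ × ℤ) := {(1, 0), (3, 1), (1, 1), (0, 1)}

-- The alternative `= 0` (for `v = w`) is enough since `0⁻¹ = 0`.
lemma det_dirsU15_dvd_six : ∀ v ∈ dirsU15, ∀ w ∈ dirsU15,
    v.2 * w.1 - v.1 * w.2 ∣ 6 ∨ v.2 * w.1 - v.1 * w.2 = 0 := by
  decide

lemma exp_mul_I_eq_ofReal_mul_skewPt {θ r c a b : ℝ} (hre : Real.cos θ = r * a)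
    (him : Real.sin θ = r * (c * b)) : exp (θ * I) = r * skewPt c a b := by
  apply Complex.ext <;> simp [exp_ofReal_mul_I_re, exp_ofReal_mul_I_im, skewPt, hre, him]

lemma U15_eq : U15 = {((1 : ℝ) : ℂ) * skewPt √3 1 0, ((√3 / 6 : ℝ) : ℂ) * skewPt √3 3 1,
    ((1 / 2 : ℝ) : ℂ) * skewPt √3 1 1, ((√3 / 3 : ℝ) : ℂ) * skewPt √3 0 1} := by
  have h3 : √3 * √3 = 3 := Real.mul_self_sqrt (by norm_num)
  have e6 := exp_mul_I_eq_ofReal_mul_skewPt (θ := Real.pi / 6) (r := √3 / 6) (c := √3)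
    (a := 3) (b := 1) (by rw [Real.cos_pi_div_six]; ring)
    (by rw [Real.sin_pi_div_six]; linear_combination -h3 / 6)
  have e3 := exp_mul_I_eq_ofReal_mul_skewPt (θ := Real.pi / 3) (r := 1 / 2) (c := √3)
    (a := 1) (b := 1) (by rw [Real.cos_pi_div_three]; ring)
    (by rw [Real.sin_pi_div_three]; ring)
  have e2 := exp_mul_I_eq_ofReal_mul_skewPt (θ := Real.pi / 2) (r := √3 / 3) (c := √3)
    (a := 0) (b := 1) (by rw [Real.cos_pi_div_two]; ring)
    (by rw [Real.sin_pi_div_two]; linear_combination -h3 / 3)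
  push_cast at e6 e3 e2 ⊢
  rw [U15, e6, e3, e2, one_mul]
  congr 1
  apply Complex.ext <;> simp [skewPt]

lemma sqrt_three_ne_zero : √3 ≠ 0 := by positivity

noncomputable def zSixthSqrtNegThree : Subring ℂ :=
  skewSubring zSixth √3 sqrt_three_sq_mem_zSixth

lemma exists_dir_of_mem_U15 {α : ℂ} (hα : α ∈ U15) :
    ∃ r : ℝ, r ≠ 0 ∧ ∃ v ∈ dirsU15, α = r * skewPt √3 v.1 v.2 := by
  rw [U15_eq] at hα
  rcases hα with rfl | rfl | rfl | rfl
  · exact ⟨1, one_ne_zero, (1, 0), by decide, by simp⟩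
  · exact ⟨√3 / 6, by positivity, (3, 1), by decide, by simp⟩
  · exact ⟨1 / 2, by norm_num, (1, 1), by decide, by simp⟩
  · exact ⟨√3 / 3, by positivity, (0, 1), by decide, by simp⟩

lemma exists_mem_U15_of_mem_dirsU15 {v : ℤ × ℤ} (hv : v ∈ dirsU15) :
    ∃ r : ℝ, r ≠ 0 ∧ (r * skewPt √3 v.1 v.2 : ℂ) ∈ U15 := by
  rw [U15_eq]
  simp only [dirsU15, Finset.mem_insert, Finset.mem_singleton] at hv
  rcases hv with rfl | rfl | rfl | rfl
  · exact ⟨1, one_ne_zero, by simp⟩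
  · exact ⟨√3 / 6, by positivity, by simp⟩
  · exact ⟨1 / 2, by norm_num, by simp⟩
  · exact ⟨√3 / 3, by positivity, by simp⟩

lemma lineInt_mem_zSixthSqrtNegThree {α β p q : ℂ} (hα : α ∈ U15) (hβ : β ∈ U15)
    (hp : p ∈ zSixthSqrtNegThree) (hq : q ∈ zSixthSqrtNegThree) :
    lineInt α β p q ∈ zSixthSqrtNegThree := by
  obtain ⟨r, hr, v, hv, rfl⟩ := exists_dir_of_mem_U15 hα
  obtain ⟨s, hs, w, hw, rfl⟩ := exists_dir_of_mem_U15 hβ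
  obtain ⟨x, hx, y, hy, rfl⟩ := hp
  obtain ⟨x', hx', y', hy', rfl⟩ := hq
  rw [lineInt_ofReal_mul hr hs]
  refine lineInt_mem_skewSubring _ sqrt_three_ne_zero (intCast_mem _ _) (intCast_mem _ _)
    (intCast_mem _ _) (intCast_mem _ _) hx hy hx' hy' ?_
  exact_mod_cast inv_intCast_mem_zSixth (det_dirsU15_dvd_six v hv w hw)

lemma brkt_ofReal_mul (r s : ℝ) (α β : ℂ) : brkt (r * α) (s * β) = r * s * brkt α β := by
  simp only [brkt, map_mul, conj_ofReal]; ring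

lemma lineInt_dirsU15_mem_RU15 {v w : ℤ × ℤ} (hv : v ∈ dirsU15) (hw : w ∈ dirsU15)
    (hδ : v.2 * w.1 - v.1 * w.2 ≠ 0) {x y x' y' : ℝ} (hp : skewPt √3 x y ∈ RU U15)
    (hq : skewPt √3 x' y' ∈ RU U15) :
    skewPt √3
      (((v.2 * x - v.1 * y) * w.1 - (w.2 * x' - w.1 * y') * v.1) / (v.2 * w.1 - v.1 * w.2))
      (((v.2 * x - v.1 * y) * w.2 - (w.2 * x' - w.1 * y') * v.2) / (v.2 * w.1 - v.1 * w.2)) ∈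
      RU U15 := by
  rw [← lineInt_skewPt sqrt_three_ne_zero]
  obtain ⟨r, hr, hrv⟩ := exists_mem_U15_of_mem_dirsU15 hv
  obtain ⟨s, hs, hsw⟩ := exists_mem_U15_of_mem_dirsU15 hw
  have hbrkt : brkt (r * skewPt √3 v.1 v.2) (s * skewPt √3 w.1 w.2) ≠ 0 := by
    have hδ' : ((v.2 * w.1 - v.1 * w.2 : ℤ) : ℝ) ≠ 0 := by exact_mod_cast hδ
    push_cast at hδ'
    rw [brkt_ofReal_mul, brkt_skewPt]
    exact mul_ne_zero (mul_ne_zero (ofReal_ne_zero.mpr hr) (ofReal_ne_zero.mpr hs))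
      (mul_ne_zero (ofReal_ne_zero.mpr (mul_ne_zero (by positivity) hδ')) I_ne_zero)
  obtain ⟨hne, hne'⟩ := ne_and_ne_neg_of_brkt_ne_zero hbrkt
  rw [← lineInt_ofReal_mul hr hs]
  exact lineInt_mem_RU ⟨_, hrv, _, hsw, hbrkt⟩ hrv hsw hne hne' hp hq

section LowerBound

variable {x y x' y' : ℝ}

-- `dirA_dirB`: the line at angle `A°` through the first point meets the line at angle `B°`
-- through the second.
lemma skewPt_mem_RU15_dir0_dir90 (hp : skewPt √3 x y ∈ RU U15)
    (hq : skewPt √3 x' y' ∈ RU U15) : skewPt √3 x' y ∈ RU U15 := by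
  convert lineInt_dirsU15_mem_RU15 (v := (1, 0)) (w := (0, 1)) (by decide) (by decide) (by decide)
    hp hq using 2 <;> push_cast <;> ring

lemma skewPt_mem_RU15_dir60_dir90 (hp : skewPt √3 x y ∈ RU U15)
    (hq : skewPt √3 x' y' ∈ RU U15) : skewPt √3 x' (y + x' - x) ∈ RU U15 := by
  convert lineInt_dirsU15_mem_RU15 (v := (1, 1)) (w := (0, 1)) (by decide) (by decide) (by decide)
    hp hq using 2 <;> push_cast <;> ring

lemma skewPt_mem_RU15_dir30_dir90 (hp : skewPt √3 x y ∈ RU U15)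
    (hq : skewPt √3 x' y' ∈ RU U15) : skewPt √3 x' (y + (x' - x) / 3) ∈ RU U15 := by
  convert lineInt_dirsU15_mem_RU15 (v := (3, 1)) (w := (0, 1)) (by decide) (by decide) (by decide)
    hp hq using 2 <;> push_cast <;> ring

lemma skewPt_mem_RU15_dir0_dir60 (hp : skewPt √3 x y ∈ RU U15)
    (hq : skewPt √3 x' y' ∈ RU U15) : skewPt √3 (y + x' - y') y ∈ RU U15 := by
  convert lineInt_dirsU15_mem_RU15 (v := (1, 0)) (w := (1, 1)) (by decide) (by decide) (by decide)
    hp hq using 2 <;> push_cast <;> ring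

lemma skewPt_mem_RU15_dir30_dir60 (hp : skewPt √3 x 0 ∈ RU U15)
    (hq : skewPt √3 x' 0 ∈ RU U15) :
    skewPt √3 ((3 * x' - x) / 2) ((x' - x) / 2) ∈ RU U15 := by
  convert lineInt_dirsU15_mem_RU15 (v := (3, 1)) (w := (1, 1)) (by decide) (by decide) (by decide)
    hp hq using 2 <;> push_cast <;> ring

lemma skewPt_zero_mem_RU15 : skewPt √3 0 0 ∈ RU U15 := by
  rw [skewPt_zero]; exact zero_mem_RU

lemma skewPt_zero_left_mem_RU15 (hx : skewPt √3 x 0 ∈ RU U15) : skewPt √3 0 x ∈ RU U15 := by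
  have hxx := skewPt_mem_RU15_dir60_dir90 skewPt_zero_mem_RU15 hx
  simpa using skewPt_mem_RU15_dir0_dir90 hxx skewPt_zero_mem_RU15

lemma skewPt_neg_mem_RU15 (hx : skewPt √3 x 0 ∈ RU U15) : skewPt √3 (-x) 0 ∈ RU U15 := by
  simpa using skewPt_mem_RU15_dir0_dir60 skewPt_zero_mem_RU15 (skewPt_zero_left_mem_RU15 hx)

lemma skewPt_add_mem_RU15 (hx : skewPt √3 x 0 ∈ RU U15) (hx' : skewPt √3 x' 0 ∈ RU U15) :
    skewPt √3 (x + x') 0 ∈ RU U15 := by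
  have hnx' := skewPt_zero_left_mem_RU15 (skewPt_neg_mem_RU15 hx')
  have hxnx' := skewPt_mem_RU15_dir0_dir90 hnx' hx
  simpa using skewPt_mem_RU15_dir0_dir60 skewPt_zero_mem_RU15 hxnx'

def abscissaeRU15 : AddSubgroup ℝ where
  carrier := {x | skewPt √3 x 0 ∈ RU U15}
  zero_mem' := skewPt_zero_mem_RU15
  neg_mem' := skewPt_neg_mem_RU15
  add_mem' := skewPt_add_mem_RU15

lemma mem_abscissaeRU15 : x ∈ abscissaeRU15 ↔ skewPt √3 x 0 ∈ RU U15 := Iff.rfl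

lemma inv_six_mul_mem_abscissaeRU15 (hx : x ∈ abscissaeRU15) : 6⁻¹ * x ∈ abscissaeRU15 := by
  have h3 := skewPt_mem_RU15_dir30_dir90 skewPt_zero_mem_RU15 hx
  have h23 : 2 / 3 * x ∈ abscissaeRU15 := by
    rw [mem_abscissaeRU15]
    convert skewPt_mem_RU15_dir0_dir60 skewPt_zero_mem_RU15 h3 using 2; ring
  have h2 := skewPt_mem_RU15_dir30_dir60 hx skewPt_zero_mem_RU15
  have h12 : -(1 / 2) * x ∈ abscissaeRU15 := by
    rw [mem_abscissaeRU15]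
    convert skewPt_mem_RU15_dir0_dir90 skewPt_zero_mem_RU15 h2 using 2; ring
  convert abscissaeRU15.add_mem h23 h12 using 1; ring

end LowerBound

lemma skewPt_mem_RU15 {x y : ℝ} (hx : x ∈ zSixth) (hy : y ∈ zSixth) :
    skewPt √3 x y ∈ RU U15 := by
  have hle := Subring.closure_singleton_subset_of_mul_mem abscissaeRU15
    (by rw [mem_abscissaeRU15, skewPt_one]; exact one_mem_RU)
    fun _ => inv_six_mul_mem_abscissaeRU15
  exact skewPt_mem_RU15_dir0_dir90 (skewPt_zero_left_mem_RU15 (hle hy)) (hle hx)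

lemma RU_U15_eq : RU U15 = zSixthSqrtNegThree := by
  refine subset_antisymm (RU_subset_of_lineInt_mem (zero_mem _) (one_mem _) ?_) ?_
  · exact fun α hα β hβ _ _ p hp q hq => lineInt_mem_zSixthSqrtNegThree hα hβ hp hq
  · rintro _ ⟨x, hx, y, hy, rfl⟩
    exact skewPt_mem_RU15 hx hy

/-- `R({1, e^{iπ/6}, e^{iπ/3}, e^{iπ/2}})` is a subring of `ℂ`. -/
theorem stmt15 :
    ∃ A : Subring ℂ, (A : Set ℂ) =
      RU {1, Complex.exp ((Real.pi / 6 : ℂ) * Complex.I),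
          Complex.exp ((Real.pi / 3 : ℂ) * Complex.I),
          Complex.exp ((Real.pi / 2 : ℂ) * Complex.I)} :=
  ⟨zSixthSqrtNegThree, RU_U15_eq.symm⟩
end

section
/- Let α be a unit-magnitude complex number such that 1, α, α², α³ are pairwise non-±-equal. Set z₁ = I_{α,α³}(0,1), z₂ = I_{α,α²}(0,1), p₁ = I_{1,α²}(0, z₁), and p₂ = I_{1,α³}(0, z₂). Then z₁ = p₁ · z₂ and z₂ = p₂ · z₁ (i.e., z₁/z₂ = p₁ and z₂/z₁ = p₂). -/
open Complex

/-! For unit `α`, the point `I_{α,β}(0,q)` lies on the real line `ℝα`, so its conjugate is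
`α⁻² I_{α,β}(0,q)`. Feeding this into the intersection formula shows that `I_{1,γ}(0,z)` is the fixed
multiple `(γ²α⁻² - 1)/(γ² - 1)` of such a `z`. With `z₁ = (α⁶ - 1)/(α⁴ - 1)` and
`z₂ = (α⁴ - 1)/(α² - 1)` both identities become identities between rational functions of `α`. -/

open ComplexConjugate

lemma ne_zero_of_norm_eq_one {z : ℂ} (hz : ‖z‖ = 1) : z ≠ 0 :=
  norm_ne_zero_iff.mp (hz ▸ one_ne_zero)

lemma conj_brkt (x y : ℂ) : conj (brkt x y) = -brkt x y := by
  simp only [brkt, map_sub, map_mul, conj_conj]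
  ring

lemma brkt_zero_right (x : ℂ) : brkt x 0 = 0 := by
  simp [brkt]

lemma lineInt_zero_left (α β q : ℂ) : lineInt α β 0 q = brkt β q / brkt β α * α := by
  simp [lineInt, brkt_zero_right]

/-- The coefficient `[β,q]/[β,α]` is a quotient of two imaginary numbers, hence real, so
`lineInt α β 0 q` lies on the real line through `α`. -/
lemma conj_lineInt_zero_left {α : ℂ} (hα : ‖α‖ = 1) (β q : ℂ) :
    conj (lineInt α β 0 q) = α⁻¹ ^ 2 * lineInt α β 0 q := by
  have hα0 := ne_zero_of_norm_eq_one hα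
  rw [lineInt_zero_left, map_mul, map_div₀, conj_brkt, conj_brkt, neg_div_neg_eq,
    ← inv_eq_conj hα]
  field_simp

/-- When `β ^ 2 = α ^ 2` both sides are the junk value `0`. -/
lemma lineInt_zero_left_of_norm_eq_one {α β : ℂ} (hα : ‖α‖ = 1) (hβ : ‖β‖ = 1) (q : ℂ) :
    lineInt α β 0 q = α ^ 2 * (β ^ 2 * conj q - q) / (β ^ 2 - α ^ 2) := by
  have hα0 := ne_zero_of_norm_eq_one hα
  have hβ0 := ne_zero_of_norm_eq_one hβ
  have hq : brkt β q = (β ^ 2 * conj q - q) * β⁻¹ := by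
    rw [brkt, ← inv_eq_conj hβ]
    field_simp
  have hα' : brkt β α = (β ^ 2 - α ^ 2) * (α * β)⁻¹ := by
    rw [brkt, ← inv_eq_conj hα, ← inv_eq_conj hβ]
    field_simp
  rw [lineInt_zero_left, hq, hα']
  simp only [div_eq_mul_inv, mul_inv, inv_inv]
  field_simp

lemma lineInt_one_zero_lineInt {α γ : ℂ} (hα : ‖α‖ = 1) (hγ : ‖γ‖ = 1) (β q : ℂ) :
    lineInt 1 γ 0 (lineInt α β 0 q) = (γ ^ 2 * α⁻¹ ^ 2 - 1) / (γ ^ 2 - 1) * lineInt α β 0 q := by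
  rw [lineInt_zero_left_of_norm_eq_one norm_one hγ, conj_lineInt_zero_left hα]
  ring

lemma lineInt_zero_one_of_norm_eq_one {α β : ℂ} (hα : ‖α‖ = 1) (hβ : ‖β‖ = 1) :
    lineInt α β 0 1 = α ^ 2 * (β ^ 2 - 1) / (β ^ 2 - α ^ 2) := by
  simpa using lineInt_zero_left_of_norm_eq_one hα hβ 1

theorem stmt19_general (α : ℂ) (hα : ‖α‖ = 1)
    (h1b : α ^ 2 ≠ 1) (h1b' : α ^ 2 ≠ -1)
    (h1c : α ^ 3 ≠ 1) (h1c' : α ^ 3 ≠ -1)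
    (z₁ z₂ p₁ p₂ : ℂ)
    (hz₁ : z₁ = lineInt α (α ^ 3) 0 1) (hz₂ : z₂ = lineInt α (α ^ 2) 0 1)
    (hp₁ : p₁ = lineInt 1 (α ^ 2) 0 z₁) (hp₂ : p₂ = lineInt 1 (α ^ 3) 0 z₂) :
    z₁ = p₁ * z₂ ∧ z₂ = p₂ * z₁ := by
  have hα2 : ‖α ^ 2‖ = 1 := by rw [norm_pow, hα, one_pow]
  have hα3 : ‖α ^ 3‖ = 1 := by rw [norm_pow, hα, one_pow]
  have hα0 := ne_zero_of_norm_eq_one hα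
  have h4 : α ^ 4 - 1 ≠ 0 := by
    have : α ^ 4 - 1 = (α ^ 2 - 1) * (α ^ 2 - -1) := by ring
    rw [this]
    exact mul_ne_zero (sub_ne_zero.mpr h1b) (sub_ne_zero.mpr h1b')
  have h6 : α ^ 6 - 1 ≠ 0 := by
    have : α ^ 6 - 1 = (α ^ 3 - 1) * (α ^ 3 - -1) := by ring
    rw [this]
    exact mul_ne_zero (sub_ne_zero.mpr h1c) (sub_ne_zero.mpr h1c')
  have hz₁' : z₁ = (α ^ 6 - 1) / (α ^ 4 - 1) := by
    rw [hz₁, lineInt_zero_one_of_norm_eq_one hα hα3]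
    field_simp
  have hz₂' : z₂ = (α ^ 4 - 1) / (α ^ 2 - 1) := by
    rw [hz₂, lineInt_zero_one_of_norm_eq_one hα hα2]
    field_simp
  have hp₁' : p₁ = (α ^ 2 - 1) / (α ^ 4 - 1) * z₁ := by
    rw [hp₁, hz₁, lineInt_one_zero_lineInt hα hα2]
    field_simp
  have hp₂' : p₂ = (α ^ 4 - 1) / (α ^ 6 - 1) * z₂ := by
    rw [hp₂, hz₂, lineInt_one_zero_lineInt hα hα3]
    field_simp
  constructor
  · rw [hp₁', hz₂']
    field_simp
  · rw [hp₂', hz₁']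
    field_simp

/-- with `z₁ = I_{α,α³}(0,1)`, `z₂ = I_{α,α²}(0,1)`, `p₁ = I_{1,α²}(0,z₁)`,
`p₂ = I_{1,α³}(0,z₂)`, we have `z₁ = p₁·z₂` and `z₂ = p₂·z₁`. -/
theorem stmt19 (α : ℂ) (hα : ‖α‖ = 1)
    (h1a : α ≠ 1) (h1a' : α ≠ -1)
    (h1b : α ^ 2 ≠ 1) (h1b' : α ^ 2 ≠ -1)
    (h1c : α ^ 3 ≠ 1) (h1c' : α ^ 3 ≠ -1)
    (hab : α ≠ α ^ 2) (hab' : α ≠ -α ^ 2)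
    (hac : α ≠ α ^ 3) (hac' : α ≠ -α ^ 3)
    (hbc : α ^ 2 ≠ α ^ 3) (hbc' : α ^ 2 ≠ -α ^ 3)
    (z₁ z₂ p₁ p₂ : ℂ)
    (hz₁ : z₁ = lineInt α (α ^ 3) 0 1) (hz₂ : z₂ = lineInt α (α ^ 2) 0 1)
    (hp₁ : p₁ = lineInt 1 (α ^ 2) 0 z₁) (hp₂ : p₂ = lineInt 1 (α ^ 3) 0 z₂) :
    z₁ = p₁ * z₂ ∧ z₂ = p₂ * z₁ :=
  stmt19_general α hα h1b h1b' h1c h1c' z₁ z₂ p₁ p₂ hz₁ hz₂ hp₁ hp₂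
end
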